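/- Let f : [a,b] → ℝ be of bounded variation and g : [a,b] → ℝ be p-H-Hölder continuous with p ∈ (0,1], H > 0. Then |T_a^{(a+b)/2}(f,g) − T_{(a+b)/2}^b(f,g)| ≤ H·(b-a)^p/(2^{2p}(p+1))·V_a^b f. -/

import Mathlib

open MeasureTheory Set intervalIntegral

/-- The Čebyšev functional on `[α, β]`. -/
noncomputable def cheb (f g : ℝ → ℝ) (α β : ℝ) : ℝ :=
  (β - α)⁻¹ * (∫ t in α..β, f t * g t) -
    ((β - α)⁻¹ * ∫ t in α..β, f t) * ((β - α)⁻¹ * ∫ t in α..β, g t)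

/-- The total variation of `f` on `[a, b]`. -/
noncomputable def totalVar (f : ℝ → ℝ) (a b : ℝ) : ℝ :=
  (eVariationOn f (Icc a b)).toReal

/-- The essential supremum norm of `h` on `[a, b]`. -/
noncomputable def supNorm (h : ℝ → ℝ) (a b : ℝ) : ℝ :=
  (eLpNorm h ⊤ (volume.restrict (Icc a b))).toReal

open Filter Topology

-- helper: BV function is interval integrable on subintervals
lemma bv_intInt {f : ℝ → ℝ} {a b α β : ℝ} (hab : a ≤ b)
    (hf : BoundedVariationOn f (Icc a b)) (h : uIcc α β ⊆ Icc a b) :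
    IntervalIntegrable f volume α β := by
  have hloc : LocallyBoundedVariationOn f (Icc a b) := hf.locallyBoundedVariationOn
  have ha : a ∈ Icc a b := left_mem_Icc.2 hab
  have h1 : MonotoneOn (variationOnFromTo f (Icc a b) a) (uIcc α β) :=
    (variationOnFromTo.monotoneOn hloc ha).mono h
  have h2 : MonotoneOn (variationOnFromTo f (Icc a b) a - f) (uIcc α β) :=
    (variationOnFromTo.sub_self_monotoneOn hloc ha).mono h
  have := (h1.intervalIntegrable (μ := volume)).sub (h2.intervalIntegrable (μ := volume))
  simpa using this


lemma holder_contOn {g : ℝ → ℝ} {a b p H : ℝ} (hp : 0 < p)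
    (hg : ∀ x ∈ Icc a b, ∀ y ∈ Icc a b, |g x - g y| ≤ H * |x - y| ^ p) :
    ContinuousOn g (Icc a b) := by
  intro x hx
  have h1 : Tendsto (fun y : ℝ => H * |y - x| ^ p) (nhdsWithin x (Icc a b)) (nhds 0) := by
    have h2 : Tendsto (fun y : ℝ => |y - x|) (nhdsWithin x (Icc a b)) (nhds 0) := by
      have h0 : Continuous (fun y : ℝ => |y - x|) :=
        (continuous_id.sub continuous_const).abs
      have := h0.tendsto x
      simp only [sub_self, abs_zero] at this
      exact this.mono_left nhdsWithin_le_nhds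
    have h3 : Tendsto (fun r : ℝ => r ^ p) (nhds (0:ℝ)) (nhds ((0:ℝ) ^ p)) :=
      (Real.continuousAt_rpow_const 0 p (Or.inr hp.le)).tendsto
    rw [Real.zero_rpow hp.ne'] at h3
    simpa using tendsto_const_nhds.mul (h3.comp h2)
  have hsq : Tendsto (fun y => dist (g y) (g x)) (nhdsWithin x (Icc a b)) (nhds 0) := by
    apply squeeze_zero' (Eventually.of_forall fun y => dist_nonneg) _ h1
    filter_upwards [self_mem_nhdsWithin] with y hy
    simpa [Real.dist_eq] using hg y hy x hx
  exact (tendsto_iff_dist_tendsto_zero).2 hsq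


lemma korkine {f g : ℝ → ℝ} {α β : ℝ} (hαβ : α < β)
    (hfi : IntervalIntegrable f volume α β) (hgi : IntervalIntegrable g volume α β)
    (hfgi : IntervalIntegrable (fun t => f t * g t) volume α β) :
    cheb f g α β =
      (2 * (β - α) ^ 2)⁻¹ * ∫ t in α..β, ∫ s in α..β, (f t - f s) * (g t - g s) := by
  have hL : (0:ℝ) < β - α := by linarith
  set F := ∫ t in α..β, f t with hF
  set G := ∫ t in α..β, g t with hG
  set P := ∫ t in α..β, f t * g t with hP
  have inner_eq : ∀ t : ℝ, (∫ s in α..β, (f t - f s) * (g t - g s)) =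
      (β - α) * (f t * g t) - f t * G - g t * F + P := by
    intro t
    have e1 : (∫ s in α..β, (f t - f s) * (g t - g s)) =
        ∫ s in α..β, ((f t * g t - f t * g s) - (g t * f s - f s * g s)) := by
      apply intervalIntegral.integral_congr
      intro s _
      ring
    rw [e1, intervalIntegral.integral_sub
        ((_root_.intervalIntegrable_const).sub (hgi.const_mul (f t)))
        ((hfi.const_mul (g t)).sub hfgi),
      intervalIntegral.integral_sub (_root_.intervalIntegrable_const) (hgi.const_mul (f t)),
      intervalIntegral.integral_sub (hfi.const_mul (g t)) hfgi,
      intervalIntegral.integral_const,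
      intervalIntegral.integral_const_mul, intervalIntegral.integral_const_mul]
    simp only [smul_eq_mul, ← hF, ← hG, ← hP]
    ring
  have outer : (∫ t in α..β, ∫ s in α..β, (f t - f s) * (g t - g s)) =
      2 * (β - α) * P - 2 * F * G := by
    have e2 : (∫ t in α..β, ∫ s in α..β, (f t - f s) * (g t - g s)) =
        ∫ t in α..β, ((β - α) * (f t * g t) - f t * G - g t * F + P) := by
      apply intervalIntegral.integral_congr
      intro t _
      exact inner_eq t
    rw [e2, intervalIntegral.integral_add
        (((hfgi.const_mul (β - α)).sub (hfi.mul_const G)).sub (hgi.mul_const F))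
        (_root_.intervalIntegrable_const),
      intervalIntegral.integral_sub ((hfgi.const_mul (β - α)).sub (hfi.mul_const G))
        (hgi.mul_const F),
      intervalIntegral.integral_sub (hfgi.const_mul (β - α)) (hfi.mul_const G),
      intervalIntegral.integral_const_mul, intervalIntegral.integral_mul_const,
      intervalIntegral.integral_mul_const, intervalIntegral.integral_const]
    simp only [smul_eq_mul, ← hF, ← hG, ← hP]
    ring
  rw [outer]
  unfold cheb
  simp only [← hF, ← hG, ← hP]
  field_simp

lemma cont_abs_rpow {p t : ℝ} (hp : 0 < p) : Continuous fun s : ℝ => |t - s| ^ p :=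
  ((continuous_const.sub continuous_id).abs).rpow_const fun _ => Or.inr hp.le

lemma int_abs_rpow {p : ℝ} (hp : 0 < p) {α β t : ℝ} (hα : α ≤ t) (hβ : t ≤ β) :
    ∫ s in α..β, |t - s| ^ p = ((t - α) ^ (p+1) + (β - t) ^ (p+1)) / (p+1) := by
  have hc := cont_abs_rpow (t := t) hp
  have hp1 : (0:ℝ) < p + 1 := by linarith
  rw [← intervalIntegral.integral_add_adjacent_intervals (b := t)
    (hc.intervalIntegrable α t) (hc.intervalIntegrable t β)]
  have e1 : (∫ s in α..t, |t - s| ^ p) = (t - α) ^ (p+1) / (p+1) := by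
    have : (∫ s in α..t, |t - s| ^ p) = ∫ s in α..t, (t - s) ^ p := by
      apply intervalIntegral.integral_congr
      intro s hs
      rw [uIcc_of_le hα] at hs
      show |t - s| ^ p = (t - s) ^ p
      rw [abs_of_nonneg (by linarith [hs.2])]
    rw [this, intervalIntegral.integral_comp_sub_left (fun u => u ^ p) t, sub_self,
      integral_rpow (Or.inl (by linarith : (-1:ℝ) < p)), Real.zero_rpow hp1.ne']
    ring
  have e2 : (∫ s in t..β, |t - s| ^ p) = (β - t) ^ (p+1) / (p+1) := by
    have : (∫ s in t..β, |t - s| ^ p) = ∫ s in t..β, (s - t) ^ p := by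
      apply intervalIntegral.integral_congr
      intro s hs
      rw [uIcc_of_le hβ] at hs
      show |t - s| ^ p = (s - t) ^ p
      rw [abs_sub_comm, abs_of_nonneg (by linarith [hs.1])]
    rw [this, intervalIntegral.integral_comp_sub_right (fun u => u ^ p) t, sub_self,
      integral_rpow (Or.inl (by linarith : (-1:ℝ) < p)), Real.zero_rpow hp1.ne']
    ring
  rw [e1, e2]
  ring

lemma int_outer {p : ℝ} (hp : 0 < p) {α β : ℝ} (hαβ : α ≤ β) :
    ∫ t in α..β, ((t - α) ^ (p+1) + (β - t) ^ (p+1)) = 2 * (β - α) ^ (p+2) / (p+2) := by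
  have hp2 : (0:ℝ) < p + 2 := by linarith
  have hc1 : Continuous fun t : ℝ => (t - α) ^ (p+1) :=
    (continuous_id.sub continuous_const).rpow_const fun _ => Or.inr (by linarith)
  have hc2 : Continuous fun t : ℝ => (β - t) ^ (p+1) :=
    (continuous_const.sub continuous_id).rpow_const fun _ => Or.inr (by linarith)
  rw [intervalIntegral.integral_add (hc1.intervalIntegrable _ _) (hc2.intervalIntegrable _ _)]
  have e1 : (∫ t in α..β, (t - α) ^ (p+1)) = (β - α) ^ (p+2) / (p+2) := by
    rw [intervalIntegral.integral_comp_sub_right (fun u => u ^ (p+1)) α, sub_self,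
      integral_rpow (Or.inl (by linarith : (-1:ℝ) < p+1)),
      show p+1+1 = p+2 by ring, Real.zero_rpow hp2.ne']
    ring
  have e2 : (∫ t in α..β, (β - t) ^ (p+1)) = (β - α) ^ (p+2) / (p+2) := by
    rw [intervalIntegral.integral_comp_sub_left (fun u => u ^ (p+1)) β, sub_self,
      integral_rpow (Or.inl (by linarith : (-1:ℝ) < p+1)),
      show p+1+1 = p+2 by ring, Real.zero_rpow hp2.ne']
    ring
  rw [e1, e2]
  ring

lemma cheb_bound {f g : ℝ → ℝ} {a b p H : ℝ} (hab : a ≤ b)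
    (hp : 0 < p) (hH : 0 < H)
    (hf : BoundedVariationOn f (Icc a b))
    (hg : ∀ x ∈ Icc a b, ∀ y ∈ Icc a b, |g x - g y| ≤ H * |x - y| ^ p)
    {α β : ℝ} (hα : a ≤ α) (hαβ : α < β) (hβ : β ≤ b) :
    |cheb f g α β| ≤ H * (β - α) ^ p / ((p+1) * (p+2)) *
      (eVariationOn f (Icc α β)).toReal := by
  have hL : (0:ℝ) < β - α := by linarith
  have hsub : Icc α β ⊆ Icc a b := Icc_subset_Icc hα hβ
  have husub : uIcc α β ⊆ Icc a b := by rw [uIcc_of_le hαβ.le]; exact hsub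
  have hfi : IntervalIntegrable f volume α β := bv_intInt hab hf husub
  have hgc : ContinuousOn g (Icc a b) := holder_contOn hp hg
  have hgcu : ContinuousOn g (uIcc α β) := hgc.mono husub
  have hgi : IntervalIntegrable g volume α β := hgcu.intervalIntegrable
  have hfgi : IntervalIntegrable (fun t => f t * g t) volume α β :=
    hfi.mul_continuousOn hgcu
  set V := (eVariationOn f (Icc α β)).toReal with hVdef
  have hV : 0 ≤ V := ENNReal.toReal_nonneg
  have hfbd : ∀ t ∈ Icc α β, ∀ s ∈ Icc α β, |f t - f s| ≤ V := by
    intro t ht s hs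
    have h1 : edist (f t) (f s) ≤ eVariationOn f (Icc α β) :=
      eVariationOn.edist_le f ht hs
    have h2 : eVariationOn f (Icc α β) ≠ ⊤ := hf.mono hsub
    have := ENNReal.toReal_mono h2 h1
    rwa [← dist_edist, Real.dist_eq] at this
  -- pointwise bound on inner integrand
  have hptwise : ∀ t ∈ Icc α β, ∀ s ∈ Icc α β,
      |(f t - f s) * (g t - g s)| ≤ V * (H * |t - s| ^ p) := by
    intro t ht s hs
    rw [abs_mul]
    exact mul_le_mul (hfbd t ht s hs) (hg t (hsub ht) s (hsub hs))
      (abs_nonneg _) hV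
  -- inner integral bound
  have hinner : ∀ t ∈ Icc α β, |∫ s in α..β, (f t - f s) * (g t - g s)| ≤
      V * H * (((t - α) ^ (p+1) + (β - t) ^ (p+1)) / (p+1)) := by
    intro t ht
    have hii : IntervalIntegrable (fun s => (f t - f s) * (g t - g s)) volume α β :=
      ((_root_.intervalIntegrable_const).sub hfi).mul_continuousOn
        (continuousOn_const.sub hgcu)
    calc |∫ s in α..β, (f t - f s) * (g t - g s)|
        ≤ ∫ s in α..β, |(f t - f s) * (g t - g s)| :=
          intervalIntegral.abs_integral_le_integral_abs hαβ.le
      _ ≤ ∫ s in α..β, V * (H * |t - s| ^ p) := by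
          apply intervalIntegral.integral_mono_on hαβ.le hii.abs
            ((continuous_const.mul (continuous_const.mul (cont_abs_rpow hp))).intervalIntegrable α β)
          exact fun s hs => hptwise t ht s hs
      _ = V * H * (((t - α) ^ (p+1) + (β - t) ^ (p+1)) / (p+1)) := by
          rw [intervalIntegral.integral_const_mul, intervalIntegral.integral_const_mul,
            int_abs_rpow hp ht.1 ht.2]
          ring
  -- outer
  have houter : |∫ t in α..β, ∫ s in α..β, (f t - f s) * (g t - g s)| ≤
      V * H * (2 * (β - α) ^ (p+2) / ((p+1) * (p+2))) := by
    have hIeq : (fun t => ∫ s in α..β, (f t - f s) * (g t - g s)) =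
        fun t => (β - α) * (f t * g t) - f t * (∫ s in α..β, g s)
          - g t * (∫ s in α..β, f s) + ∫ s in α..β, f s * g s := by
      funext t
      have e1 : (∫ s in α..β, (f t - f s) * (g t - g s)) =
          ∫ s in α..β, ((f t * g t - f t * g s) - (g t * f s - f s * g s)) := by
        apply intervalIntegral.integral_congr; intro s _; ring
      rw [e1, intervalIntegral.integral_sub
          ((_root_.intervalIntegrable_const).sub (hgi.const_mul (f t)))
          ((hfi.const_mul (g t)).sub hfgi),
        intervalIntegral.integral_sub (_root_.intervalIntegrable_const) (hgi.const_mul (f t)),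
        intervalIntegral.integral_sub (hfi.const_mul (g t)) hfgi,
        intervalIntegral.integral_const,
        intervalIntegral.integral_const_mul, intervalIntegral.integral_const_mul]
      simp only [smul_eq_mul]
      ring
    have hIint : IntervalIntegrable
        (fun t => ∫ s in α..β, (f t - f s) * (g t - g s)) volume α β := by
      rw [hIeq]
      exact (((hfgi.const_mul (β - α)).sub (hfi.mul_const _)).sub (hgi.mul_const _)).add
        (_root_.intervalIntegrable_const)
    have hBint : IntervalIntegrable
        (fun t => V * H * (((t - α) ^ (p+1) + (β - t) ^ (p+1)) / (p+1))) volume α β := by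
      apply Continuous.intervalIntegrable
      have hc1 : Continuous fun t : ℝ => (t - α) ^ (p+1) :=
        (continuous_id.sub continuous_const).rpow_const fun _ => Or.inr (by linarith)
      have hc2 : Continuous fun t : ℝ => (β - t) ^ (p+1) :=
        (continuous_const.sub continuous_id).rpow_const fun _ => Or.inr (by linarith)
      exact continuous_const.mul ((hc1.add hc2).div_const _)
    calc |∫ t in α..β, ∫ s in α..β, (f t - f s) * (g t - g s)|
        ≤ ∫ t in α..β, |∫ s in α..β, (f t - f s) * (g t - g s)| :=
          intervalIntegral.abs_integral_le_integral_abs hαβ.le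
      _ ≤ ∫ t in α..β, V * H * (((t - α) ^ (p+1) + (β - t) ^ (p+1)) / (p+1)) := by
          apply intervalIntegral.integral_mono_on hαβ.le hIint.abs hBint
          exact hinner
      _ = V * H * (2 * (β - α) ^ (p+2) / ((p+1) * (p+2))) := by
          rw [show (fun t => V * H * (((t - α) ^ (p+1) + (β - t) ^ (p+1)) / (p+1))) =
              (fun t => (V * H / (p+1)) * (((t - α) ^ (p+1) + (β - t) ^ (p+1)))) from
              funext fun t => by ring]
          rw [intervalIntegral.integral_const_mul, int_outer hp hαβ.le]
          field_simp
  rw [korkine hαβ hfi hgi hfgi, abs_mul, abs_of_pos (by positivity :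
    (0:ℝ) < (2 * (β - α) ^ 2)⁻¹)]
  have hpow : (β - α) ^ (p+2) = (β - α) ^ p * (β - α) ^ 2 := by
    rw [Real.rpow_add hL, Real.rpow_two]
  calc (2 * (β - α) ^ 2)⁻¹ * |∫ t in α..β, ∫ s in α..β, (f t - f s) * (g t - g s)|
      ≤ (2 * (β - α) ^ 2)⁻¹ * (V * H * (2 * (β - α) ^ (p+2) / ((p+1) * (p+2)))) := by
        apply mul_le_mul_of_nonneg_left houter (by positivity)
    _ = H * (β - α) ^ p / ((p+1) * (p+2)) * V := by
        rw [hpow]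
        field_simp

theorem stmt8 (f g : ℝ → ℝ) (a b p H : ℝ) (hab : a < b)
    (hp : 0 < p) (hp1 : p ≤ 1) (hH : 0 < H)
    (hf : BoundedVariationOn f (Icc a b))
    (hg : ∀ x ∈ Icc a b, ∀ y ∈ Icc a b, |g x - g y| ≤ H * |x - y| ^ p) :
    |cheb f g a ((a + b) / 2) - cheb f g ((a + b) / 2) b| ≤
      H * (b - a) ^ p / (2 ^ (2 * p) * (p + 1)) * totalVar f a b := by
  set m := (a + b) / 2 with hm
  have ham : a < m := by rw [hm]; linarith
  have hmb : m < b := by rw [hm]; linarith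
  have hma : m - a = (b - a) / 2 := by rw [hm]; ring
  have hbm : b - m = (b - a) / 2 := by rw [hm]; ring
  have hV1fin : eVariationOn f (Icc a m) ≠ ⊤ := hf.mono (Icc_subset_Icc le_rfl hmb.le)
  have hV2fin : eVariationOn f (Icc m b) ≠ ⊤ := hf.mono (Icc_subset_Icc ham.le le_rfl)
  set V1 := (eVariationOn f (Icc a m)).toReal
  set V2 := (eVariationOn f (Icc m b)).toReal
  have hVsum : V1 + V2 = totalVar f a b := by
    have := eVariationOn.Icc_add_Icc f (s := Icc a b) ham.le hmb.le
      (⟨ham.le, hmb.le⟩ : m ∈ Icc a b)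
    rw [inter_eq_self_of_subset_right (Icc_subset_Icc le_rfl hmb.le),
      inter_eq_self_of_subset_right (Icc_subset_Icc ham.le le_rfl),
      inter_self] at this
    rw [totalVar, ← this, ENNReal.toReal_add hV1fin hV2fin]
  have h1 := cheb_bound hab.le hp hH hf hg le_rfl ham hmb.le
  have h2 := cheb_bound hab.le hp hH hf hg ham.le hmb le_rfl
  rw [hma] at h1
  rw [hbm] at h2
  have hq : ((b - a) / 2) ^ p = (b - a) ^ p / 2 ^ p :=
    Real.div_rpow (by linarith) (by norm_num) p
  rw [hq] at h1 h2
  have hVt : 0 ≤ totalVar f a b := ENNReal.toReal_nonneg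
  have h2p : (2:ℝ) ^ p ≤ p + 2 := by
    calc (2:ℝ) ^ p ≤ (2:ℝ) ^ (1:ℝ) :=
          Real.rpow_le_rpow_of_exponent_le one_le_two hp1
      _ = 2 := Real.rpow_one 2
      _ ≤ p + 2 := by linarith
  have h2ppos : (0:ℝ) < (2:ℝ) ^ p := Real.rpow_pos_of_pos two_pos p
  have hbap : (0:ℝ) ≤ (b - a) ^ p := Real.rpow_nonneg (by linarith) p
  have h22p : (2:ℝ) ^ (2 * p) = 2 ^ p * 2 ^ p := by
    rw [two_mul, Real.rpow_add two_pos]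
  calc |cheb f g a m - cheb f g m b| ≤ |cheb f g a m| + |cheb f g m b| := abs_sub _ _
    _ ≤ H * ((b - a) ^ p / 2 ^ p) / ((p + 1) * (p + 2)) * (V1 + V2) := by
        rw [mul_add]; exact add_le_add h1 h2
    _ = H * ((b - a) ^ p / 2 ^ p) / ((p + 1) * (p + 2)) * totalVar f a b := by rw [hVsum]
    _ ≤ H * (b - a) ^ p / (2 ^ (2 * p) * (p + 1)) * totalVar f a b := by
        apply mul_le_mul_of_nonneg_right _ hVt
        rw [h22p]
        rw [div_le_div_iff₀ (by positivity) (by positivity)]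
        have key : (2:ℝ) ^ p * ((2:ℝ) ^ p * (p + 1)) ≤ 2 ^ p * ((p + 1) * (p + 2)) := by
          apply mul_le_mul_of_nonneg_left _ h2ppos.le
          have : (2:ℝ) ^ p * (p + 1) ≤ (p + 2) * (p + 1) :=
            mul_le_mul_of_nonneg_right h2p (by linarith)
          linarith [this]
        calc H * ((b - a) ^ p / 2 ^ p) * (2 ^ p * 2 ^ p * (p + 1))
            = H * (b - a) ^ p * (2 ^ p * (p + 1)) := by field_simp
          _ ≤ H * (b - a) ^ p * ((p + 1) * (p + 2)) := by
              apply mul_le_mul_of_nonneg_left _ (by positivity)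
              nlinarith [h2ppos.le]
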